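/- Let X : ℝ^{n₁×⋯×n_d} → ℝ^m be a linear map, let B ∈ G_{r,s,τ}, η ∈ ℝ^m, and y = X(B) + η. Fix γ ∈ (0,1) and suppose there is δ ∈ (0, γ/(4+γ)) such that (1−δ)·‖Z‖_F² ≤ ‖X(Z)‖₂² ≤ (1+δ)·‖Z‖_F² for every Z ∈ G_{2r,s,2τ} (where 2r = (2r₁,…,2r_d)). Set μ = 1/(1+δ) and b = (1+3δ)/(1−δ). Let (B^k)_{k≥0} be a sequence of tensors with B^0 ∈ G_{r,s,τ} such that for every k ≥ 0 one has B^{k+1} ∈ G_{r,s,τ} and ‖B^{k+1} − W̃^k‖_F ≤ ‖B − W̃^k‖_F, where W̃^k = B^k − μ·X*(X(B^k) − y) and X* denotes the adjoint of X with respect to the Frobenius inner product on ℝ^{n₁×⋯×n_d} and the Euclidean inner product on ℝ^m. Then for every k ≥ 1, ‖B^k − B‖_F² ≤ (2γ^k/(1−δ))·‖y − X(B^0)‖₂² + (2‖η‖₂²/(1−δ))·(1 + b/(1−γ)). -/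

import Mathlib

open scoped BigOperators

noncomputable section

/-- Frobenius (ℓ2) norm of a finitely-indexed real array. -/
def frob {ι : Type*} [Fintype ι] (Z : ι → ℝ) : ℝ :=
  Real.sqrt (∑ x, (Z x) ^ 2)

/-- ℓ1 norm of a finitely-indexed real array. -/
def l1 {ι : Type*} [Fintype ι] (Z : ι → ℝ) : ℝ :=
  ∑ x, |Z x|

/-- Tucker product `S ×₁ U₁ ×₂ U₂ ⋯ ×_d U_d`. -/
def tucker {d : ℕ} {n r : Fin d → ℕ} (S : (∀ i, Fin (r i)) → ℝ)
    (U : ∀ i, Fin (n i) → Fin (r i) → ℝ) : (∀ i, Fin (n i)) → ℝ :=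
  fun x => ∑ k : ∀ i, Fin (r i), S k * ∏ i, U i (x i) (k i)

/-- The set `G_{r,s,τ}` of `r`-rank, `s`-sparse tensors whose core has ℓ1 norm at most `τ`
and whose factor-matrix columns have at most `sᵢ` nonzero entries and ℓ2 norm at most 1. -/
def Gset {d : ℕ} (n r s : Fin d → ℕ) (τ : ℝ) : Set ((∀ i, Fin (n i)) → ℝ) :=
  { Z | ∃ (S : (∀ i, Fin (r i)) → ℝ) (U : ∀ i, Fin (n i) → Fin (r i) → ℝ),
      l1 S ≤ τ ∧
      (∀ i j, (Function.support fun a => U i a j).ncard ≤ s i) ∧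
      (∀ i j, Real.sqrt (∑ a, (U i a j) ^ 2) ≤ 1) ∧
      Z = tucker S U }


/-!
Write `ρₖ = X(Bᵏ) - y`. Comparing `Bᵏ⁺¹` with `B` in the projection inequality, expanding both
squares around `Bᵏ` and moving `X*` across with the adjoint identity, the upper RIP bound on
`Bᵏ⁺¹ - Bᵏ` and the lower one on `B - Bᵏ` (both lie in `G_{2r,s,2τ}`) give
`(1 - δ)‖ρₖ₊₁‖² ≤ (1 - δ)‖η‖² + 2δ‖η + ρₖ‖²`, hence `‖ρₖ₊₁‖² ≤ γ‖ρₖ‖² + b‖η‖²`.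
Unrolling this recursion and applying the lower RIP bound once more to `Bᵏ - B` gives the estimate.
Only the Hilbert-space structure matters, so the analysis is done in an arbitrary real inner
product space and transported to tensors through `EuclideanSpace`.
-/

open Function

theorem l1_add_le {ι : Type*} [Fintype ι] (f g : ι → ℝ) : l1 (f + g) ≤ l1 f + l1 g := by
  rw [l1, l1, l1, ← Finset.sum_add_distrib]
  exact Finset.sum_le_sum fun x _ => abs_add_le (f x) (g x)

theorem l1_neg {ι : Type*} [Fintype ι] (f : ι → ℝ) : l1 (-f) = l1 f := by
  simp [l1]

theorem l1_extend_zero {α β : Type*} [Fintype α] [Fintype β] {e : α → β} (he : Injective e)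
    (f : α → ℝ) : l1 (extend e f 0) = l1 f := by
  refine (Fintype.sum_of_injective e he _ _ (fun b hb => ?_) fun a => ?_).symm
  · rw [extend_apply' _ _ _ hb, Pi.zero_apply, abs_zero]
  · rw [he.extend_apply]

section Tucker

variable {d : ℕ} {n r : Fin d → ℕ}

theorem tucker_add (S S' : (∀ i, Fin (r i)) → ℝ) (U : ∀ i, Fin (n i) → Fin (r i) → ℝ) :
    tucker (S + S') U = tucker S U + tucker S' U := by
  funext x
  simp only [tucker, Pi.add_apply, add_mul, Finset.sum_add_distrib]

theorem tucker_neg (S : (∀ i, Fin (r i)) → ℝ) (U : ∀ i, Fin (n i) → Fin (r i) → ℝ) :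
    tucker (-S) U = -tucker S U := by
  funext x
  simp only [tucker, Pi.neg_apply, neg_mul, Finset.sum_neg_distrib]

theorem tucker_extend_zero {r' : Fin d → ℕ} {e : ∀ i, Fin (r i) → Fin (r' i)}
    (he : ∀ i, Injective (e i)) (S : (∀ i, Fin (r i)) → ℝ)
    (U : ∀ i, Fin (n i) → Fin (r' i) → ℝ) :
    tucker (extend (Pi.map e) S 0) U = tucker S (fun i a j => U i a (e i j)) := by
  funext x
  refine (Fintype.sum_of_injective _ (Injective.piMap he) _ _ (fun k hk => ?_) fun k => ?_).symm
  · rw [extend_apply' _ _ _ hk, Pi.zero_apply, zero_mul]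
  · rw [(Injective.piMap he).extend_apply]
    rfl

end Tucker

section Gset

variable {d : ℕ} {n r s : Fin d → ℕ} {τ : ℝ}

theorem neg_mem_Gset {Z : (∀ i, Fin (n i)) → ℝ} (hZ : Z ∈ Gset n r s τ) :
    -Z ∈ Gset n r s τ := by
  obtain ⟨S, U, hS, hsupp, hcol, rfl⟩ := hZ
  exact ⟨-S, U, (l1_neg S).trans_le hS, hsupp, hcol, (tucker_neg S U).symm⟩

/-- The witness stacks the two cores block-diagonally and the factor matrices side by side. -/
theorem add_mem_Gset {r' : Fin d → ℕ} {τ' : ℝ} {Z Z' : (∀ i, Fin (n i)) → ℝ}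
    (hZ : Z ∈ Gset n r s τ) (hZ' : Z' ∈ Gset n r' s τ') :
    Z + Z' ∈ Gset n (fun i => r i + r' i) s (τ + τ') := by
  obtain ⟨S, U, hS, hsupp, hcol, rfl⟩ := hZ
  obtain ⟨S', U', hS', hsupp', hcol', rfl⟩ := hZ'
  have hleft : ∀ i, Injective (Fin.castAdd (n := r i) (r' i)) := fun i =>
    Fin.castAdd_injective (r i) (r' i)
  have hright : ∀ i, Injective (Fin.natAdd (r i) : Fin (r' i) → _) := fun i =>
    Fin.natAdd_injective (r' i) (r i)
  refine ⟨extend (Pi.map fun i => Fin.castAdd (r' i)) S 0 +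
      extend (Pi.map fun i => Fin.natAdd (r i)) S' 0,
    fun i a => Fin.addCases (U i a) (U' i a), ?_, ?_, ?_, ?_⟩
  · calc _ ≤ _ := l1_add_le _ _
      _ ≤ τ + τ' := by rw [l1_extend_zero (Injective.piMap hleft),
          l1_extend_zero (Injective.piMap hright)]; exact add_le_add hS hS'
  · intro i j
    induction j using Fin.addCases with
    | left j => simpa only [Fin.addCases_left] using hsupp i j
    | right j => simpa only [Fin.addCases_right] using hsupp' i j
  · intro i j
    induction j using Fin.addCases with
    | left j => simpa only [Fin.addCases_left] using hcol i j
    | right j => simpa only [Fin.addCases_right] using hcol' i j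
  · rw [tucker_add, tucker_extend_zero hleft, tucker_extend_zero hright]
    simp only [Fin.addCases_left, Fin.addCases_right]

theorem sub_mem_Gset {Z Z' : (∀ i, Fin (n i)) → ℝ} (hZ : Z ∈ Gset n r s τ)
    (hZ' : Z' ∈ Gset n r s τ) : Z - Z' ∈ Gset n (fun i => 2 * r i) s (2 * τ) := by
  simpa only [sub_eq_add_neg, two_mul] using add_mem_Gset hZ (neg_mem_Gset hZ')

end Gset

theorem le_geom_add_of_le_mul_add {a : ℕ → ℝ} {γ c : ℝ} (hγ0 : 0 ≤ γ) (hγ1 : γ < 1)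
    (hc : 0 ≤ c) (h : ∀ k, a (k + 1) ≤ γ * a k + c) (k : ℕ) :
    a k ≤ γ ^ k * a 0 + c / (1 - γ) := by
  have h1γ : 0 < 1 - γ := sub_pos.2 hγ1
  induction k with
  | zero => simpa using div_nonneg hc h1γ.le
  | succ k ih =>
    calc a (k + 1) ≤ γ * (γ ^ k * a 0 + c / (1 - γ)) + c :=
          (h k).trans (by gcongr)
      _ = γ ^ (k + 1) * a 0 + c / (1 - γ) := by field_simp; ring

theorem norm_add_sq_le_two_mul {G : Type*} [SeminormedAddGroup G] (x y : G) :
    ‖x + y‖ ^ 2 ≤ 2 * (‖x‖ ^ 2 + ‖y‖ ^ 2) :=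
  (pow_le_pow_left₀ (norm_nonneg _) (norm_add_le x y) 2).trans add_sq_le

open RealInnerProductSpace

section InnerProductSpace

variable {E F : Type*} [NormedAddCommGroup E] [InnerProductSpace ℝ E]
  [NormedAddCommGroup F] [InnerProductSpace ℝ F]

theorem sq_norm_add_mul_inner_le_of_norm_add_smul_le {u w g : E} (μ : ℝ)
    (h : ‖u + μ • g‖ ≤ ‖w + μ • g‖) :
    ‖u‖ ^ 2 + 2 * μ * ⟪u, g⟫ ≤ ‖w‖ ^ 2 + 2 * μ * ⟪w, g⟫ := by
  have h2 := pow_le_pow_left₀ (norm_nonneg _) h 2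
  rw [norm_add_sq_real, norm_add_sq_real, real_inner_smul_right, real_inner_smul_right] at h2
  linarith

theorem sq_norm_residual_step_le (X : E →ₗ[ℝ] F) (Xstar : F →ₗ[ℝ] E)
    (hadj : ∀ z v, ⟪X z, v⟫ = ⟪z, Xstar v⟫) {δ μ : ℝ} (hδ0 : 0 ≤ δ) (hδ1 : δ < 1)
    (hμ : μ * (1 + δ) = 1) {Btrue Bk Bnext : E} {y η : F} (hy : y = X Btrue + η)
    (hproj : ‖Bnext - (Bk - μ • Xstar (X Bk - y))‖ ≤ ‖Btrue - (Bk - μ • Xstar (X Bk - y))‖)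
    (hupper : ‖X (Bnext - Bk)‖ ^ 2 ≤ (1 + δ) * ‖Bnext - Bk‖ ^ 2)
    (hlower : (1 - δ) * ‖Btrue - Bk‖ ^ 2 ≤ ‖X (Btrue - Bk)‖ ^ 2) :
    ‖X Bnext - y‖ ^ 2 ≤ 4 * δ / (1 - δ) * ‖X Bk - y‖ ^ 2 + (1 + 3 * δ) / (1 - δ) * ‖η‖ ^ 2 := by
  set ρ := X Bk - y
  set u := Bnext - Bk
  set w := Btrue - Bk
  have h1δ : 0 < 1 - δ := sub_pos.2 hδ1
  have hXu : X Bnext - y = X u + ρ := by simp only [u, ρ, map_sub]; abel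
  have hXw : X w = -(η + ρ) := by simp only [w, ρ, hy, map_sub]; abel
  have hproj' : ‖u + μ • Xstar ρ‖ ≤ ‖w + μ • Xstar ρ‖ := by
    simpa only [u, w, sub_sub_eq_add_sub, add_sub_right_comm] using hproj
  have hdescent : (1 + δ) * ‖u‖ ^ 2 + 2 * ⟪X u, ρ⟫ ≤ (1 + δ) * ‖w‖ ^ 2 + 2 * ⟪X w, ρ⟫ := by
    have := mul_le_mul_of_nonneg_left
      (sq_norm_add_mul_inner_le_of_norm_add_smul_le μ hproj') (by linarith : 0 ≤ 1 + δ)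
    rw [← hadj, ← hadj] at this
    linear_combination this + (2 * ⟪X w, ρ⟫ - 2 * ⟪X u, ρ⟫) * hμ
  have hw : (1 + δ) * ‖w‖ ^ 2 ≤ (1 + δ) / (1 - δ) * ‖X w‖ ^ 2 := by
    rw [div_mul_eq_mul_div, le_div_iff₀ h1δ]
    nlinarith
  calc ‖X Bnext - y‖ ^ 2 = ‖X u‖ ^ 2 + 2 * ⟪X u, ρ⟫ + ‖ρ‖ ^ 2 := by rw [hXu, norm_add_sq_real]
    _ ≤ (1 + δ) * ‖w‖ ^ 2 + 2 * ⟪X w, ρ⟫ + ‖ρ‖ ^ 2 := by linarith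
    _ ≤ (1 + δ) / (1 - δ) * ‖X w‖ ^ 2 + 2 * ⟪X w, ρ⟫ + ‖ρ‖ ^ 2 := by linarith
    _ = ‖X w + ρ‖ ^ 2 + 2 * δ / (1 - δ) * ‖X w‖ ^ 2 := by
      rw [norm_add_sq_real]
      field_simp
      ring
    _ = ‖η‖ ^ 2 + 2 * δ / (1 - δ) * ‖η + ρ‖ ^ 2 := by
      rw [hXw, norm_neg, show -(η + ρ) + ρ = -η by abel, norm_neg]
    _ ≤ ‖η‖ ^ 2 + 2 * δ / (1 - δ) * (2 * (‖η‖ ^ 2 + ‖ρ‖ ^ 2)) := by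
      gcongr
      exact norm_add_sq_le_two_mul η ρ
    _ = _ := by field_simp; ring

theorem tpgd_convergence_of_rip (G : Set E) (X : E →ₗ[ℝ] F) (Xstar : F →ₗ[ℝ] E)
    (hadj : ∀ z v, ⟪X z, v⟫ = ⟪z, Xstar v⟫) {Btrue : E} (hBtrue : Btrue ∈ G) {η y : F}
    (hy : y = X Btrue + η) {γ δ : ℝ} (hγ : γ ∈ Set.Ioo (0 : ℝ) 1) (hδ0 : 0 ≤ δ)
    (hδ : δ < γ / (4 + γ))
    (hRIP : ∀ a ∈ G, ∀ a' ∈ G, (1 - δ) * ‖a - a'‖ ^ 2 ≤ ‖X (a - a')‖ ^ 2 ∧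
      ‖X (a - a')‖ ^ 2 ≤ (1 + δ) * ‖a - a'‖ ^ 2)
    {μ b : ℝ} (hμ : μ = 1 / (1 + δ)) (hb : b = (1 + 3 * δ) / (1 - δ)) {B : ℕ → E}
    (hB : ∀ k, B k ∈ G)
    (hproj : ∀ k, ‖B (k + 1) - (B k - μ • Xstar (X (B k) - y))‖ ≤
      ‖Btrue - (B k - μ • Xstar (X (B k) - y))‖) (k : ℕ) :
    ‖B k - Btrue‖ ^ 2 ≤
      2 * γ ^ k / (1 - δ) * ‖y - X (B 0)‖ ^ 2 + 2 * ‖η‖ ^ 2 / (1 - δ) * (1 + b / (1 - γ)) := by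
  obtain ⟨hγ0, hγ1⟩ := hγ
  have h4γ : 0 < 4 + γ := by linarith
  have hδ1 : δ < 1 := hδ.trans ((div_lt_one h4γ).2 (by linarith))
  have h1δ : 0 < 1 - δ := sub_pos.2 hδ1
  have hcontr : 4 * δ / (1 - δ) ≤ γ := by
    rw [lt_div_iff₀ h4γ] at hδ
    rw [div_le_iff₀ h1δ]
    linarith
  have hb0 : 0 ≤ b := hb ▸ div_nonneg (by linarith) h1δ.le
  have hresidual : ∀ k, ‖X (B (k + 1)) - y‖ ^ 2 ≤ γ * ‖X (B k) - y‖ ^ 2 + b * ‖η‖ ^ 2 :=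
    fun k => calc
      _ ≤ 4 * δ / (1 - δ) * ‖X (B k) - y‖ ^ 2 + (1 + 3 * δ) / (1 - δ) * ‖η‖ ^ 2 :=
        sq_norm_residual_step_le X Xstar hadj hδ0 hδ1 (by rw [hμ]; field_simp) hy (hproj k)
          (hRIP _ (hB _) _ (hB _)).2 (hRIP _ hBtrue _ (hB _)).1
      _ ≤ _ := by rw [hb]; gcongr
  have hgeom := le_geom_add_of_le_mul_add (a := fun k => ‖X (B k) - y‖ ^ 2) hγ0.le hγ1
    (by positivity) hresidual k
  have herror : (1 - δ) * ‖B k - Btrue‖ ^ 2 ≤ 2 * (‖X (B k) - y‖ ^ 2 + ‖η‖ ^ 2) := by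
    refine (hRIP _ (hB k) _ hBtrue).1.trans ?_
    rw [show X (B k - Btrue) = (X (B k) - y) + η by rw [hy, map_sub]; abel]
    exact norm_add_sq_le_two_mul _ _
  calc ‖B k - Btrue‖ ^ 2 ≤ 2 * (‖X (B k) - y‖ ^ 2 + ‖η‖ ^ 2) / (1 - δ) := by
        rw [le_div_iff₀ h1δ]; linarith
    _ ≤ 2 * (γ ^ k * ‖X (B 0) - y‖ ^ 2 + b * ‖η‖ ^ 2 / (1 - γ) + ‖η‖ ^ 2) / (1 - δ) := by
        gcongr
    _ = _ := by rw [norm_sub_rev y]; field_simp; ring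

end InnerProductSpace

section Euclidean

variable {ι κ : Type*}

theorem frob_eq_norm_toLp [Fintype ι] (Z : ι → ℝ) : frob Z = ‖WithLp.toLp 2 Z‖ := by
  simp [frob, EuclideanSpace.norm_eq]

theorem sum_sq_eq_norm_toLp_sq [Fintype ι] (Z : ι → ℝ) :
    ∑ x, Z x ^ 2 = ‖WithLp.toLp 2 Z‖ ^ 2 := by
  rw [← frob_eq_norm_toLp, frob, Real.sq_sqrt (Finset.sum_nonneg fun _ _ => sq_nonneg _)]

theorem sum_mul_eq_inner_toLp [Fintype ι] (Z W : ι → ℝ) :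
    ∑ x, Z x * W x = ⟪WithLp.toLp 2 Z, WithLp.toLp 2 W⟫ := by
  simp [PiLp.inner_apply, mul_comm]

def euclideanLin (X : (ι → ℝ) →ₗ[ℝ] (κ → ℝ)) :
    EuclideanSpace ℝ ι →ₗ[ℝ] EuclideanSpace ℝ κ :=
  (WithLp.linearEquiv 2 ℝ (ι → ℝ)).symm.arrowCongr (WithLp.linearEquiv 2 ℝ (κ → ℝ)).symm X

@[simp]
theorem euclideanLin_apply (X : (ι → ℝ) →ₗ[ℝ] (κ → ℝ)) (z : EuclideanSpace ℝ ι) :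
    euclideanLin X z = WithLp.toLp 2 (X z.ofLp) :=
  rfl

end Euclidean

theorem tpgd_convergence_general
    {d m : ℕ} {n r s : Fin d → ℕ} {τ : ℝ}
    (X : ((∀ i, Fin (n i)) → ℝ) →ₗ[ℝ] (Fin m → ℝ))
    (Xstar : (Fin m → ℝ) →ₗ[ℝ] ((∀ i, Fin (n i)) → ℝ))
    (hadj : ∀ (Z : (∀ i, Fin (n i)) → ℝ) (v : Fin m → ℝ),
      ∑ i, X Z i * v i = ∑ x, Z x * Xstar v x)
    (Btrue : (∀ i, Fin (n i)) → ℝ) (hBtrue : Btrue ∈ Gset n r s τ)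
    (η y : Fin m → ℝ) (hy : y = X Btrue + η)
    (γ δ : ℝ) (hγ : γ ∈ Set.Ioo (0 : ℝ) 1) (hδ0 : 0 < δ) (hδ : δ < γ / (4 + γ))
    (hRIP : ∀ Z ∈ Gset n (fun i => 2 * r i) s (2 * τ),
      (1 - δ) * frob Z ^ 2 ≤ ∑ i, (X Z i) ^ 2 ∧
      ∑ i, (X Z i) ^ 2 ≤ (1 + δ) * frob Z ^ 2)
    (μ b : ℝ) (hμ : μ = 1 / (1 + δ)) (hb : b = (1 + 3 * δ) / (1 - δ))
    (B : ℕ → ((∀ i, Fin (n i)) → ℝ)) (hB0 : B 0 ∈ Gset n r s τ)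
    (hstep : ∀ k : ℕ, B (k + 1) ∈ Gset n r s τ ∧
      frob (B (k + 1) - (B k - μ • Xstar (X (B k) - y))) ≤
        frob (Btrue - (B k - μ • Xstar (X (B k) - y)))) :
    ∀ k : ℕ, 1 ≤ k →
      frob (B k - Btrue) ^ 2 ≤
        2 * γ ^ k / (1 - δ) * (∑ i, (y i - X (B 0) i) ^ 2) +
        2 * (∑ i, (η i) ^ 2) / (1 - δ) * (1 + b / (1 - γ)) := by
  intro k _
  have hB : ∀ k, B k ∈ Gset n r s τ := fun k => k.casesOn hB0 fun k => (hstep k).1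
  have key := tpgd_convergence_of_rip (WithLp.ofLp ⁻¹' Gset n r s τ)
    (euclideanLin X) (euclideanLin Xstar)
    (fun z v => by simpa [sum_mul_eq_inner_toLp, real_inner_comm] using hadj z.ofLp v.ofLp)
    (B := fun k => WithLp.toLp 2 (B k)) hBtrue
    (congrArg (WithLp.toLp 2) hy) hγ hδ0.le hδ
    (fun a ha a' ha' => by
      have h := hRIP _ (sub_mem_Gset ha ha')
      rw [frob_eq_norm_toLp, sum_sq_eq_norm_toLp_sq] at h
      exact h)
    hμ hb hB (fun k => by simpa [frob_eq_norm_toLp] using (hstep k).2) k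
  rw [frob_eq_norm_toLp, sum_sq_eq_norm_toLp_sq, sum_sq_eq_norm_toLp_sq η]
  exact key

/-- convergence of tensor projected gradient descent (Theorem 3.1). -/
theorem tpgd_convergence
    {d m : ℕ} {n r s : Fin d → ℕ} {τ : ℝ} (hτ : 0 < τ)
    (X : ((∀ i, Fin (n i)) → ℝ) →ₗ[ℝ] (Fin m → ℝ))
    (Xstar : (Fin m → ℝ) →ₗ[ℝ] ((∀ i, Fin (n i)) → ℝ))
    (hadj : ∀ (Z : (∀ i, Fin (n i)) → ℝ) (v : Fin m → ℝ),
      ∑ i, X Z i * v i = ∑ x, Z x * Xstar v x)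
    (Btrue : (∀ i, Fin (n i)) → ℝ) (hBtrue : Btrue ∈ Gset n r s τ)
    (η y : Fin m → ℝ) (hy : y = X Btrue + η)
    (γ δ : ℝ) (hγ : γ ∈ Set.Ioo (0 : ℝ) 1) (hδ0 : 0 < δ) (hδ : δ < γ / (4 + γ))
    (hRIP : ∀ Z ∈ Gset n (fun i => 2 * r i) s (2 * τ),
      (1 - δ) * frob Z ^ 2 ≤ ∑ i, (X Z i) ^ 2 ∧
      ∑ i, (X Z i) ^ 2 ≤ (1 + δ) * frob Z ^ 2)
    (μ b : ℝ) (hμ : μ = 1 / (1 + δ)) (hb : b = (1 + 3 * δ) / (1 - δ))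
    (B : ℕ → ((∀ i, Fin (n i)) → ℝ)) (hB0 : B 0 ∈ Gset n r s τ)
    (hstep : ∀ k : ℕ, B (k + 1) ∈ Gset n r s τ ∧
      frob (B (k + 1) - (B k - μ • Xstar (X (B k) - y))) ≤
        frob (Btrue - (B k - μ • Xstar (X (B k) - y)))) :
    ∀ k : ℕ, 1 ≤ k →
      frob (B k - Btrue) ^ 2 ≤
        2 * γ ^ k / (1 - δ) * (∑ i, (y i - X (B 0) i) ^ 2) +
        2 * (∑ i, (η i) ^ 2) / (1 - δ) * (1 + b / (1 - γ)) :=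
  tpgd_convergence_general X Xstar hadj Btrue hBtrue η y hy γ δ hγ hδ0 hδ hRIP μ b hμ hb B hB0 hstep
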